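/- Given a stable coloring f : [ℕ]² → ℕ and a uniformly computable sequence of sets R₀, R₁, …, there exists an (f ⊕ R⃗)-computable tournament T such that every infinite transitive subtournament of T is either thin for the limit coloring f̃ or is R⃗-cohesive. -/

import Mathlib

open Classical Filter

noncomputable section

/-- Codes for partial functions recursive in an oracle. -/
inductive OCode : Type
  | zero | succ | left | right | oracle
  | pair (a b : OCode) | comp (a b : OCode) | prec (a b : OCode) | rfind' (a : OCode)

/-- Evaluation of an oracle code with oracle `O`. -/
def OCode.eval (O : ℕ →. ℕ) : OCode → ℕ →. ℕ
  | .zero => pure 0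
  | .succ => Nat.succ
  | .left => ↑fun n : ℕ => n.unpair.1
  | .right => ↑fun n : ℕ => n.unpair.2
  | .oracle => O
  | .pair a b => fun n => Nat.pair <$> a.eval O n <*> b.eval O n
  | .comp a b => fun n => b.eval O n >>= a.eval O
  | .prec a b => Nat.unpaired fun m n =>
      n.rec (a.eval O m) fun y IH => do let i ← IH; b.eval O (Nat.pair m (Nat.pair y i))
  | .rfind' a => fun n => Nat.rfind fun m => (fun k => k = 0) <$> a.eval O (Nat.pair n m)

/-- An injective numbering of oracle codes. -/
def OCode.encodeC : OCode → ℕ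
  | .zero => Nat.pair 0 0
  | .succ => Nat.pair 1 0
  | .left => Nat.pair 2 0
  | .right => Nat.pair 3 0
  | .oracle => Nat.pair 4 0
  | .pair a b => Nat.pair 5 (Nat.pair a.encodeC b.encodeC)
  | .comp a b => Nat.pair 6 (Nat.pair a.encodeC b.encodeC)
  | .prec a b => Nat.pair 7 (Nat.pair a.encodeC b.encodeC)
  | .rfind' a => Nat.pair 8 a.encodeC

/-- `f` is partial recursive in the oracle `O`. -/
def RecIn (O : ℕ →. ℕ) (f : ℕ →. ℕ) : Prop := ∃ c : OCode, c.eval O = f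

/-- The `e`-th partial function recursive in `O` (`Φ_e^O`). -/
def phi (O : ℕ →. ℕ) (e : ℕ) : ℕ →. ℕ :=
  if h : ∃ c : OCode, c.encodeC = e then h.choose.eval O else fun _ => Part.none

/-- The characteristic function of a set of naturals, as an oracle. -/
def chOracle (X : Set ℕ) : ℕ →. ℕ := fun n => Part.some (if n ∈ X then 1 else 0)

/-- A total function as an oracle. -/
def fnOracle (f : ℕ → ℕ) : ℕ →. ℕ := fun n => Part.some (f n)

/-- A two-variable total function as an oracle. -/
def pairFnOracle (f : ℕ → ℕ → ℕ) : ℕ →. ℕ :=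
  fun n => Part.some (f n.unpair.1 n.unpair.2)

/-- The Turing jump of a set `X` : the halting problem relative to `X`. -/
def jumpSet (X : Set ℕ) : Set ℕ := {e | (phi (chOracle X) e e).Dom}

/-- The effective join of two sets of naturals. -/
def joinSet (A B : Set ℕ) : Set ℕ :=
  {n | (n % 2 = 0 ∧ n / 2 ∈ A) ∨ (n % 2 = 1 ∧ n / 2 ∈ B)}

/-- The join of two oracles. -/
def joinO (O₁ O₂ : ℕ →. ℕ) : ℕ →. ℕ :=
  fun n => if n % 2 = 0 then O₁ (n / 2) else O₂ (n / 2)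

/-- Turing reducibility between sets of naturals. -/
def setLEset (A B : Set ℕ) : Prop :=
  RecIn (chOracle B) (fnOracle fun n => if n ∈ A then 1 else 0)

/-! A colour `2 i` or `2 i + 1` of the edge `x — s` (`x < s`) refers to the set `R i`: the edge
points from `x` to `s` iff `s ∈ R i` for the even colour and iff `s ∉ R i` for the odd one.
If `H` is not thin it contains `x` and `y` with limit colours `F x = 2 i` and `F y = 2 i + 1`; if
it is not cohesive for `R i` either, it contains arbitrarily large `s₀ ∈ R i` and `s₁ ∉ R i`.
Once `f x ·` and `f y ·` have settled, the edges run `x → s₀ → y → s₁ → x`, a cycle in `H`. -/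

namespace RecIn

variable {O f g : ℕ →. ℕ} {a b : ℕ → ℕ}

theorem of_partrec (h : Nat.Partrec f) : RecIn O f := by
  induction h with
  | zero => exact ⟨.zero, rfl⟩
  | succ => exact ⟨.succ, rfl⟩
  | left => exact ⟨.left, rfl⟩
  | right => exact ⟨.right, rfl⟩
  | pair _ _ ihf ihg =>
    obtain ⟨cf, rfl⟩ := ihf; obtain ⟨cg, rfl⟩ := ihg
    exact ⟨.pair cf cg, rfl⟩
  | comp _ _ ihf ihg =>
    obtain ⟨cf, rfl⟩ := ihf; obtain ⟨cg, rfl⟩ := ihg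
    exact ⟨.comp cf cg, rfl⟩
  | prec _ _ ihf ihg =>
    obtain ⟨cf, rfl⟩ := ihf; obtain ⟨cg, rfl⟩ := ihg
    exact ⟨.prec cf cg, rfl⟩
  | rfind _ ihf =>
    obtain ⟨cf, rfl⟩ := ihf
    exact ⟨.rfind' cf, rfl⟩

theorem bind (hf : RecIn O f) (hg : RecIn O g) : RecIn O fun n => g n >>= f := by
  obtain ⟨cf, rfl⟩ := hf; obtain ⟨cg, rfl⟩ := hg
  exact ⟨.comp cf cg, rfl⟩

theorem pair (hf : RecIn O f) (hg : RecIn O g) :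
    RecIn O fun n => Nat.pair <$> f n <*> g n := by
  obtain ⟨cf, rfl⟩ := hf; obtain ⟨cg, rfl⟩ := hg
  exact ⟨.pair cf cg, rfl⟩

theorem oracle (O : ℕ →. ℕ) : RecIn O O := ⟨.oracle, rfl⟩

theorem of_primrec (h : Primrec a) : RecIn O (fnOracle a) :=
  of_partrec (Nat.Partrec.of_primrec (Primrec.nat_iff.1 h))

theorem of_primrec₂ {g : ℕ → ℕ → ℕ} (h : Primrec₂ g) : RecIn O (fnOracle (Nat.unpaired g)) :=
  of_primrec (Primrec₂.unpaired.2 h)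

theorem of_eq (hf : RecIn O f) (h : ∀ n, f n = g n) : RecIn O g := by
  obtain ⟨c, rfl⟩ := hf
  exact ⟨c, funext h⟩

theorem comp (ha : RecIn O (fnOracle a)) (hb : RecIn O (fnOracle b)) :
    RecIn O (fnOracle (a ∘ b)) :=
  (ha.bind hb).of_eq fun _ => Part.bind_some _ _

theorem comp₂ {g : ℕ → ℕ → ℕ} (hg : RecIn O (fnOracle (Nat.unpaired g)))
    (ha : RecIn O (fnOracle a)) (hb : RecIn O (fnOracle b)) :
    RecIn O (fnOracle fun n => g (a n) (b n)) := by
  have hab : RecIn O (fnOracle fun n => Nat.pair (a n) (b n)) :=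
    (ha.pair hb).of_eq fun n => by simp [fnOracle, Seq.seq]
  exact (hg.comp hab).of_eq fun n => by simp [fnOracle]

theorem joinO_left (O₁ O₂ : ℕ →. ℕ) : RecIn (joinO O₁ O₂) O₁ :=
  ((oracle _).bind (of_primrec (Primrec.nat_mul.comp (Primrec.const 2) Primrec.id))).of_eq
    fun n => (Part.bind_some _ _).trans (by simp [joinO])

theorem joinO_right (O₁ O₂ : ℕ →. ℕ) : RecIn (joinO O₁ O₂) O₂ :=
  ((oracle _).bind (of_primrec
      (Primrec.succ.comp (Primrec.nat_mul.comp (Primrec.const 2) Primrec.id)))).of_eq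
    fun n => (Part.bind_some _ _).trans (by simp [joinO, Nat.mul_add_div])

end RecIn

def IsForward (f : ℕ → ℕ → ℕ) (R : ℕ → Set ℕ) (x s : ℕ) : Prop :=
  s ∈ R (f x s / 2) ↔ f x s % 2 = 0

def colorTournament (f : ℕ → ℕ → ℕ) (R : ℕ → Set ℕ) (x y : ℕ) : Prop :=
  (x < y ∧ IsForward f R x y) ∨ (y < x ∧ ¬ IsForward f R y x)

section colorTournament

variable {f : ℕ → ℕ → ℕ} {R : ℕ → Set ℕ} {x y s i : ℕ}

theorem colorTournament_irrefl (x : ℕ) : ¬ colorTournament f R x x := by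
  simp [colorTournament]

theorem colorTournament_of_lt (h : x < y) : colorTournament f R x y ↔ IsForward f R x y := by
  simp [colorTournament, h, h.not_gt]

theorem colorTournament_of_gt (h : y < x) : colorTournament f R x y ↔ ¬ IsForward f R y x := by
  simp [colorTournament, h, h.not_gt]

theorem colorTournament_iff_not (h : x ≠ y) :
    colorTournament f R x y ↔ ¬ colorTournament f R y x := by
  rcases h.lt_or_gt with h | h
  · rw [colorTournament_of_lt h, colorTournament_of_gt h, not_not]
  · rw [colorTournament_of_gt h, colorTournament_of_lt h]

theorem colorTournament_path_of_mem (hx : x < s) (hy : y < s) (hfx : f x s = 2 * i)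
    (hfy : f y s = 2 * i + 1) (hs : s ∈ R i) :
    colorTournament f R x s ∧ colorTournament f R s y := by
  rw [colorTournament_of_lt hx, colorTournament_of_gt hy, IsForward, IsForward, hfx, hfy]
  simp [Nat.mul_add_div, hs]

theorem colorTournament_path_of_notMem (hx : x < s) (hy : y < s) (hfx : f x s = 2 * i)
    (hfy : f y s = 2 * i + 1) (hs : s ∉ R i) :
    colorTournament f R y s ∧ colorTournament f R s x := by
  rw [colorTournament_of_lt hy, colorTournament_of_gt hx, IsForward, IsForward, hfx, hfy]
  simp [Nat.mul_add_div, hs]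

theorem thin_or_cohesive_of_transitive {F : ℕ → ℕ}
    (hstab : ∀ x, ∀ᶠ s in atTop, f x s = F x) {H : Set ℕ} (htrans : ∀ x ∈ H, ∀ y ∈ H, ∀ z ∈ H,
      colorTournament f R x y → colorTournament f R y z → colorTournament f R x z) :
    (∃ c, ∀ x ∈ H, F x ≠ c) ∨ ∀ i, (H ∩ R i).Finite ∨ (H \ R i).Finite := by
  refine or_iff_not_imp_left.2 fun hthick i => ?_
  push Not at hthick
  by_contra! hcoh
  obtain ⟨x, hxH, hx⟩ := hthick (2 * i)
  obtain ⟨y, hyH, hy⟩ := hthick (2 * i + 1)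
  have hlate : ∀ᶠ s in atTop, x < s ∧ y < s ∧ f x s = 2 * i ∧ f y s = 2 * i + 1 := by
    filter_upwards [eventually_gt_atTop x, eventually_gt_atTop y, hstab x, hstab y]
      with s hxs hys hfx hfy
    exact ⟨hxs, hys, hfx.trans hx, hfy.trans hy⟩
  obtain ⟨s₀, ⟨hs₀H, hs₀R⟩, hxs₀, hys₀, hfxs₀, hfys₀⟩ :=
    (Nat.frequently_atTop_iff_infinite.2 hcoh.1).and_eventually hlate |>.exists
  obtain ⟨s₁, ⟨hs₁H, hs₁R⟩, hxs₁, hys₁, hfxs₁, hfys₁⟩ :=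
    (Nat.frequently_atTop_iff_infinite.2 hcoh.2).and_eventually hlate |>.exists
  obtain ⟨hxs₀, hs₀y⟩ := colorTournament_path_of_mem hxs₀ hys₀ hfxs₀ hfys₀ hs₀R
  obtain ⟨hys₁, hs₁x⟩ := colorTournament_path_of_notMem hxs₁ hys₁ hfxs₁ hfys₁ hs₁R
  have hxy : x ≠ y := by rintro rfl; omega
  exact (colorTournament_iff_not hxy).1 (htrans x hxH s₀ hs₀H y hyH hxs₀ hs₀y)
    (htrans y hyH s₁ hs₁H x hxH hys₁ hs₁x)

end colorTournament

def forwardBit (c r : ℕ) : ℕ := if (r = 1 ↔ c % 2 = 0) then 1 else 0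

def orientBit (n p : ℕ) : ℕ :=
  if n.unpair.1 < n.unpair.2 then p else if n.unpair.2 < n.unpair.1 then 1 - p else 0

theorem forwardBit_primrec : Primrec₂ forwardBit := by
  have hr : PrimrecPred fun p : ℕ × ℕ => p.2 = 1 :=
    Primrec.eq.comp Primrec.snd (Primrec.const 1)
  have hc : PrimrecPred fun p : ℕ × ℕ => p.1 % 2 = 0 :=
    Primrec.eq.comp (Primrec.nat_mod.comp Primrec.fst (Primrec.const 2)) (Primrec.const 0)
  have hiff : PrimrecPred fun p : ℕ × ℕ => (p.2 = 1 ↔ p.1 % 2 = 0) :=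
    (Primrec.eq.comp hr.decide hc.decide).of_eq fun _ => decide_eq_decide
  exact Primrec.ite hiff (Primrec.const 1) (Primrec.const 0)

theorem orientBit_primrec : Primrec₂ orientBit := by
  have hx : Primrec fun p : ℕ × ℕ => p.1.unpair.1 :=
    Primrec.fst.comp (Primrec.unpair.comp .fst)
  have hy : Primrec fun p : ℕ × ℕ => p.1.unpair.2 :=
    Primrec.snd.comp (Primrec.unpair.comp .fst)
  exact Primrec.ite (Primrec.nat_lt.comp hx hy) Primrec.snd <|
    Primrec.ite (Primrec.nat_lt.comp hy hx) (Primrec.nat_sub.comp (.const 1) .snd) (.const 0)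

theorem ite_colorTournament (f : ℕ → ℕ → ℕ) (R : ℕ → Set ℕ) (x y : ℕ) :
    (if colorTournament f R x y then 1 else 0) =
      orientBit (Nat.pair x y) (forwardBit (f (min x y) (max x y))
        (if max x y ∈ R (f (min x y) (max x y) / 2) then 1 else 0)) := by
  rcases lt_trichotomy x y with h | rfl | h
  · simp [orientBit, forwardBit, colorTournament_of_lt h, IsForward, h, h.le]
  · simp [orientBit, colorTournament_irrefl]
  · simp [orientBit, forwardBit, colorTournament_of_gt h, IsForward, h, h.le, h.not_gt]
    split_ifs <;> rfl

theorem colorTournament_recIn (f : ℕ → ℕ → ℕ) (R : ℕ → Set ℕ) :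
    RecIn (joinO (pairFnOracle f)
        (fnOracle fun n => if n.unpair.2 ∈ R n.unpair.1 then 1 else 0))
      (fnOracle fun n => if colorTournament f R n.unpair.1 n.unpair.2 then 1 else 0) := by
  set O := joinO (pairFnOracle f)
    (fnOracle fun n => if n.unpair.2 ∈ R n.unpair.1 then 1 else 0)
  have hmin : RecIn O (fnOracle (Nat.unpaired min)) := RecIn.of_primrec₂ Primrec.nat_min
  have hmax : RecIn O (fnOracle (Nat.unpaired max)) := RecIn.of_primrec₂ Primrec.nat_max
  have hcolor : RecIn O (fnOracle fun n => f (Nat.unpaired min n) (Nat.unpaired max n)) :=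
    (RecIn.joinO_left _ _).comp₂ hmin hmax
  have hindex : RecIn O (fnOracle fun n => f (Nat.unpaired min n) (Nat.unpaired max n) / 2) :=
    (RecIn.of_primrec (Primrec.nat_div.comp .id (.const 2))).comp hcolor
  have hR : RecIn O (fnOracle (Nat.unpaired fun i s => if s ∈ R i then 1 else 0)) :=
    RecIn.joinO_right _ _
  have hmem := hR.comp₂ hindex hmax
  have hforward := (RecIn.of_primrec₂ forwardBit_primrec).comp₂ hcolor hmem
  refine ((RecIn.of_primrec₂ orientBit_primrec).comp₂ (RecIn.of_primrec .id) hforward).of_eq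
    fun n => ?_
  simp only [fnOracle, ite_colorTournament, Nat.pair_unpair, Nat.unpaired, id]

theorem stmt12_general (f : ℕ → ℕ → ℕ) (F : ℕ → ℕ)
    (hstab : ∀ x, ∀ᶠ s in atTop, f x s = F x)
    (R : ℕ → Set ℕ) :
    ∃ T : ℕ → ℕ → Prop,
      (∀ x, ¬ T x x) ∧
      (∀ x y : ℕ, x ≠ y → (T x y ↔ ¬ T y x)) ∧
      RecIn (joinO (pairFnOracle f)
          (fnOracle fun n => if n.unpair.2 ∈ R n.unpair.1 then 1 else 0))
        (fnOracle fun n => if T n.unpair.1 n.unpair.2 then 1 else 0) ∧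
      ∀ H : Set ℕ, H.Infinite →
        (∀ x ∈ H, ∀ y ∈ H, ∀ z ∈ H, T x y → T y z → T x z) →
        (∃ c : ℕ, ∀ x ∈ H, F x ≠ c) ∨
        (∀ i : ℕ, (H ∩ R i).Finite ∨ (H \ R i).Finite) :=
  ⟨colorTournament f R, colorTournament_irrefl, fun _ _ => colorTournament_iff_not,
    colorTournament_recIn f R, fun _ _ => thin_or_cohesive_of_transitive hstab⟩

/-- From a stable coloring and a uniformly computable sequence of sets, one
builds an `(f ⊕ R⃗)`-computable tournament all of whose infinite transitive
subtournaments are thin for the limit coloring or `R⃗`-cohesive. -/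
theorem stmt12 (f : ℕ → ℕ → ℕ) (F : ℕ → ℕ)
    (hstab : ∀ x, ∀ᶠ s in atTop, f x s = F x)
    (R : ℕ → Set ℕ)
    (hR : RecIn (chOracle ∅)
      (fnOracle fun n => if n.unpair.2 ∈ R n.unpair.1 then 1 else 0)) :
    ∃ T : ℕ → ℕ → Prop,
      (∀ x, ¬ T x x) ∧
      (∀ x y : ℕ, x ≠ y → (T x y ↔ ¬ T y x)) ∧
      RecIn (joinO (pairFnOracle f)
          (fnOracle fun n => if n.unpair.2 ∈ R n.unpair.1 then 1 else 0))
        (fnOracle fun n => if T n.unpair.1 n.unpair.2 then 1 else 0) ∧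
      ∀ H : Set ℕ, H.Infinite →
        (∀ x ∈ H, ∀ y ∈ H, ∀ z ∈ H, T x y → T y z → T x z) →
        (∃ c : ℕ, ∀ x ∈ H, F x ≠ c) ∨
        (∀ i : ℕ, (H ∩ R i).Finite ∨ (H \ R i).Finite) :=
  stmt12_general f F hstab R

end
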